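/- Let φ: C → D be a coalgebra map satisfying Σ ε(aⁱ) bⁱ = Σ aⁱ ε(bⁱ) for all Σ aⁱ ⊗ bⁱ ∈ C □_D C. Then for every right C-comodule M, the coaction ρ_M: M → M □_D C is bijective, with inverse ν_M(Σ mⁱ ⊗ cⁱ) = Σ mⁱ ε(cⁱ). In particular ρ_M ∘ ν_M = id on M □_D C. -/

import Mathlib

open TensorProduct LinearMap

/-!
For `x ∈ M □_D C` put `y = (ρ_M ⊗ id) x ∈ M ⊗ C ⊗ C`. Coassociativity makes `ρ_M` a morphism of
`D`-comodules (via `φ`), so `y` is killed by `id_M ⊗ (the map cutting out C □_D C)`; as `M` is flat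
over the field `k`, this kernel is `M ⊗ (C □_D C)`. On `y`, `id ⊗ ε ⊗ id` returns `x` by the counit
law and `id ⊗ id ⊗ ε` returns `ρ_M (ν x)`, and by hypothesis the two agree on `M ⊗ (C □_D C)`.
-/

theorem LinearMap.lTensor_apply_eq_zero_of_ker_le {k M V W E : Type*} [CommRing k]
    [AddCommGroup M] [Module k M] [Module.Flat k M]
    [AddCommGroup V] [Module k V] [AddCommGroup W] [Module k W] [AddCommGroup E] [Module k E]
    {F : V →ₗ[k] W} {G : V →ₗ[k] E} (h : ker F ≤ ker G) {y : M ⊗[k] V}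
    (hy : lTensor M F y = 0) : lTensor M G y = 0 := by
  obtain ⟨z, rfl⟩ := (Module.Flat.lTensor_exact M (exact_subtype_ker_map F) y).1 hy
  have hG : G ∘ₗ (ker F).subtype = 0 := by ext v; exact h v.2
  rw [← comp_apply, ← lTensor_comp, hG, lTensor_zero, zero_apply]

section Cotensor

variable {k M N N' C D : Type*} [CommRing k] [AddCommGroup M] [Module k M]
  [AddCommGroup N] [Module k N] [AddCommGroup N'] [Module k N']
  [AddCommGroup C] [Module k C] [AddCommGroup D] [Module k D]

/-- For a right `D`-coaction `α` on `N` and a left `D`-coaction `β` on `C`, the cotensor product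
`N □_D C` is the kernel of this map. -/
def cotensorMap (α : N →ₗ[k] N ⊗[k] D) (β : C →ₗ[k] D ⊗[k] C) :
    N ⊗[k] C →ₗ[k] N ⊗[k] (D ⊗[k] C) :=
  (TensorProduct.assoc k N D C).toLinearMap ∘ₗ rTensor C α - lTensor N β

theorem cotensorMap_comp_rTensor {α : N →ₗ[k] N ⊗[k] D} {α' : N' →ₗ[k] N' ⊗[k] D}
    {f : N →ₗ[k] N'} (hf : α' ∘ₗ f = rTensor D f ∘ₗ α) (β : C →ₗ[k] D ⊗[k] C) :
    cotensorMap α' β ∘ₗ rTensor C f = rTensor (D ⊗[k] C) f ∘ₗ cotensorMap α β := by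
  have hassoc : (TensorProduct.assoc k N' D C).toLinearMap ∘ₗ rTensor C (rTensor D f) =
      rTensor (D ⊗[k] C) f ∘ₗ (TensorProduct.assoc k N D C).toLinearMap :=
    TensorProduct.ext_threefold fun _ _ _ => rfl
  rw [cotensorMap, cotensorMap, sub_comp, comp_sub, comp_assoc, ← rTensor_comp, hf,
    rTensor_comp, ← comp_assoc, hassoc, comp_assoc, lTensor_comp_rTensor, rTensor_comp_lTensor]

theorem lTensor_cotensorMap_comp_assoc (α : N →ₗ[k] N ⊗[k] D) (β : C →ₗ[k] D ⊗[k] C) :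
    lTensor M (cotensorMap α β) ∘ₗ (TensorProduct.assoc k M N C).toLinearMap =
      (TensorProduct.assoc k M N (D ⊗[k] C)).toLinearMap ∘ₗ
        cotensorMap ((TensorProduct.assoc k M N D).symm.toLinearMap ∘ₗ lTensor M α) β := by
  refine TensorProduct.ext_threefold fun m n c => ?_
  simp only [cotensorMap, lTensor_sub, coe_comp, LinearEquiv.coe_coe, Function.comp_apply,
    assoc_tmul, LinearMap.sub_apply, lTensor_tmul, rTensor_tmul, map_sub, sub_left_inj]
  induction α n with
  | zero => simp
  | add => simp_all [tmul_add, add_tmul]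
  | tmul => simp

end Cotensor

section Counit

variable {k M P C : Type*} [CommRing k] [AddCommGroup M] [Module k M]
  [AddCommGroup P] [Module k P] [AddCommGroup C] [Module k C] (ε : C →ₗ[k] k)

theorem lTensor_lid_comp_rTensor_comp_assoc :
    lTensor M ((TensorProduct.lid k C).toLinearMap ∘ₗ rTensor C ε) ∘ₗ
        (TensorProduct.assoc k M C C).toLinearMap =
      rTensor C ((TensorProduct.rid k M).toLinearMap ∘ₗ lTensor M ε) :=
  TensorProduct.ext_threefold fun m c c' => by simp [smul_tmul]

theorem lTensor_rid_comp_lTensor_comp_assoc_comp_rTensor (f : M →ₗ[k] P ⊗[k] C) :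
    lTensor P ((TensorProduct.rid k C).toLinearMap ∘ₗ lTensor C ε) ∘ₗ
        (TensorProduct.assoc k P C C).toLinearMap ∘ₗ rTensor C f =
      f ∘ₗ (TensorProduct.rid k M).toLinearMap ∘ₗ lTensor M ε := by
  refine TensorProduct.ext' fun m c => ?_
  simp only [coe_comp, LinearEquiv.coe_coe, Function.comp_apply, rTensor_tmul, lTensor_tmul,
    rid_tmul, map_smul]
  induction f m with
  | zero => simp
  | add => simp_all [add_tmul]
  | tmul => simp

end Counit

section Comodule

variable {k M C D : Type*} [CommRing k] [AddCommGroup M] [Module k M]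
  [AddCommGroup C] [Module k C] [CoalgebraStruct k C] [AddCommGroup D] [Module k D]
  {ρ : M →ₗ[k] M ⊗[k] C} (φ : C →ₗ[k] D)

theorem assoc_symm_comp_lTensor_comp_coaction
    (hρ : (TensorProduct.assoc k M C C).toLinearMap ∘ₗ rTensor C ρ ∘ₗ ρ =
      lTensor M (Coalgebra.comul (R := k) (A := C)) ∘ₗ ρ) :
    ((TensorProduct.assoc k M C D).symm.toLinearMap ∘ₗ
        lTensor M (lTensor C φ ∘ₗ Coalgebra.comul)) ∘ₗ ρ =
      rTensor D ρ ∘ₗ lTensor M φ ∘ₗ ρ :=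
  calc _ = ((TensorProduct.assoc k M C D).symm.toLinearMap ∘ₗ lTensor M (lTensor C φ) ∘ₗ
          (TensorProduct.assoc k M C C).toLinearMap) ∘ₗ rTensor C ρ ∘ₗ ρ := by
        simp only [lTensor_comp, ← hρ, comp_assoc]
    _ = rTensor D ρ ∘ₗ lTensor M φ ∘ₗ ρ := by
        rw [← lTensor_tensor, ← comp_assoc, lTensor_comp_rTensor, ← rTensor_comp_lTensor,
          comp_assoc]

theorem cotensorMap_comp_coaction
    (hρ : (TensorProduct.assoc k M C C).toLinearMap ∘ₗ rTensor C ρ ∘ₗ ρ =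
      lTensor M (Coalgebra.comul (R := k) (A := C)) ∘ₗ ρ) :
    cotensorMap (lTensor M φ ∘ₗ ρ) (rTensor C φ ∘ₗ Coalgebra.comul) ∘ₗ ρ = 0 := by
  rw [cotensorMap, sub_comp, sub_eq_zero, lTensor_comp, comp_assoc, comp_assoc, ← hρ,
    rTensor_comp, ← comp_assoc, ← comp_assoc, ← comp_assoc, lTensor_rTensor_comp_assoc,
    comp_assoc, comp_assoc]

theorem lTensor_cotensorMap_comp_assoc_comp_rTensor_coaction
    (hρ : (TensorProduct.assoc k M C C).toLinearMap ∘ₗ rTensor C ρ ∘ₗ ρ =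
      lTensor M (Coalgebra.comul (R := k) (A := C)) ∘ₗ ρ) :
    lTensor M (cotensorMap (lTensor C φ ∘ₗ Coalgebra.comul) (rTensor C φ ∘ₗ Coalgebra.comul)) ∘ₗ
        (TensorProduct.assoc k M C C).toLinearMap ∘ₗ rTensor C ρ =
      (TensorProduct.assoc k M C (D ⊗[k] C)).toLinearMap ∘ₗ rTensor (D ⊗[k] C) ρ ∘ₗ
        cotensorMap (lTensor M φ ∘ₗ ρ) (rTensor C φ ∘ₗ Coalgebra.comul) := by
  rw [← comp_assoc, lTensor_cotensorMap_comp_assoc, comp_assoc,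
    cotensorMap_comp_rTensor (assoc_symm_comp_lTensor_comp_coaction φ hρ)]

end Comodule

/-- Let `φ : C → D` be a coalgebra map satisfying
`Σ ε(aⁱ) bⁱ = Σ aⁱ ε(bⁱ)` on `C □_D C`. Then for every right `C`-comodule `M`
the coaction `ρ_M : M → M □_D C` is bijective, with inverse
`ν_M(Σ mⁱ ⊗ cⁱ) = Σ mⁱ ε(cⁱ)`; in particular `ρ_M ∘ ν_M = id` on `M □_D C`. -/
theorem coaction_bijective_of_counit_symm
    {k : Type*} [Field k]
    {C : Type*} [AddCommGroup C] [Module k C] [Coalgebra k C]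
    {D : Type*} [AddCommGroup D] [Module k D] [Coalgebra k D]
    (φ : C →ₗc[k] D)
    (cotCC : Submodule k (C ⊗[k] C))
    (hcotCC : cotCC = LinearMap.ker
      ((TensorProduct.assoc k C D C).toLinearMap ∘ₗ
        (LinearMap.rTensor C ((LinearMap.lTensor C φ.toLinearMap) ∘ₗ
          Coalgebra.comul))
        - LinearMap.lTensor C ((LinearMap.rTensor C φ.toLinearMap) ∘ₗ
            Coalgebra.comul)))
    (hsymm : ∀ x ∈ cotCC,
      ((TensorProduct.lid k C).toLinearMap ∘ₗ
        LinearMap.rTensor C (Coalgebra.counit (R := k) (A := C))) x =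
      ((TensorProduct.rid k C).toLinearMap ∘ₗ
        LinearMap.lTensor C (Coalgebra.counit (R := k) (A := C))) x)
    {M : Type*} [AddCommGroup M] [Module k M]
    (ρM : M →ₗ[k] M ⊗[k] C)
    (hcounit : ∀ m : M, (TensorProduct.rid k M)
      ((LinearMap.lTensor M (Coalgebra.counit (R := k) (A := C))) (ρM m)) = m)
    (hcoassoc : (TensorProduct.assoc k M C C).toLinearMap ∘ₗ
        LinearMap.rTensor C ρM ∘ₗ ρM
      = LinearMap.lTensor M (Coalgebra.comul (R := k) (A := C)) ∘ₗ ρM)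
    (cotMC : Submodule k (M ⊗[k] C))
    (hcotMC : cotMC = LinearMap.ker
      ((TensorProduct.assoc k M D C).toLinearMap ∘ₗ
        (LinearMap.rTensor C ((LinearMap.lTensor M φ.toLinearMap) ∘ₗ ρM))
        - LinearMap.lTensor M ((LinearMap.rTensor C φ.toLinearMap) ∘ₗ
            Coalgebra.comul)))
    (ν : M ⊗[k] C →ₗ[k] M)
    (hν : ν = (TensorProduct.rid k M).toLinearMap ∘ₗ
      LinearMap.lTensor M (Coalgebra.counit (R := k) (A := C))) :
    -- ρ_M lands in M □_D C, ν ∘ ρ_M = id on M, and ρ_M ∘ ν = id on M □_D C,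
    -- i.e. ρ_M : M → M □_D C is bijective with inverse ν
    (∀ m : M, ρM m ∈ cotMC)
    ∧ (∀ m : M, ν (ρM m) = m)
    ∧ (∀ x ∈ cotMC, ρM (ν x) = x) := by
  subst hcotCC hcotMC hν
  set ε := Coalgebra.counit (R := k) (A := C)
  refine ⟨fun m => LinearMap.congr_fun (cotensorMap_comp_coaction φ.toLinearMap hcoassoc) m,
    hcounit, fun x hx => ?_⟩
  replace hx : cotensorMap (lTensor M φ.toLinearMap ∘ₗ ρM)
      (rTensor C φ.toLinearMap ∘ₗ Coalgebra.comul) x = 0 := mem_ker.1 hx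
  set y := TensorProduct.assoc k M C C (rTensor C ρM x)
  have hy : lTensor M (cotensorMap (lTensor C φ.toLinearMap ∘ₗ Coalgebra.comul)
      (rTensor C φ.toLinearMap ∘ₗ Coalgebra.comul)) y = 0 := by
    have h := LinearMap.congr_fun
      (lTensor_cotensorMap_comp_assoc_comp_rTensor_coaction φ.toLinearMap hcoassoc) x
    simp only [comp_apply, LinearEquiv.coe_coe] at h
    rw [h, hx, map_zero, map_zero]
  have hker : ker (cotensorMap (lTensor C φ.toLinearMap ∘ₗ Coalgebra.comul)
      (rTensor C φ.toLinearMap ∘ₗ Coalgebra.comul)) ≤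
      ker ((TensorProduct.lid k C).toLinearMap ∘ₗ rTensor C ε -
        (TensorProduct.rid k C).toLinearMap ∘ₗ lTensor C ε) := fun z hz => by
    rw [mem_ker, LinearMap.sub_apply, sub_eq_zero]; exact hsymm z hz
  have hG := lTensor_apply_eq_zero_of_ker_le hker hy
  rw [lTensor_sub, LinearMap.sub_apply, sub_eq_zero] at hG
  have hνρ : ((TensorProduct.rid k M).toLinearMap ∘ₗ lTensor M ε) ∘ₗ ρM = LinearMap.id :=
    LinearMap.ext hcounit
  calc ρM _ = lTensor M ((TensorProduct.rid k C).toLinearMap ∘ₗ lTensor C ε) y :=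
        (LinearMap.congr_fun (lTensor_rid_comp_lTensor_comp_assoc_comp_rTensor ε ρM) x).symm
    _ = lTensor M ((TensorProduct.lid k C).toLinearMap ∘ₗ rTensor C ε) y := hG.symm
    _ = rTensor C (((TensorProduct.rid k M).toLinearMap ∘ₗ lTensor M ε) ∘ₗ ρM) x := by
        rw [rTensor_comp, ← lTensor_lid_comp_rTensor_comp_assoc]; rfl
    _ = x := by rw [hνρ, rTensor_id, id_apply]
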